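/- arXiv:1911.08761 — 2 statements merged into one kernel-verified Lean document; each statement's English description precedes it below -/
import Mathlib

section
/- If there exist t_1 mutually unbiased SEBks in C^d ⊗ C^{d'} and t_2 mutually unbiased bases of C^q, then there exist at least min{t_1, t_2} mutually unbiased SEBks in C^d ⊗ C^{qd'}; i.e., M_k(d, qd') ≥ min{N(q), M_k(d,d')}. -/
/-! Tensoring with a unit vector `x ∈ ℂ^q` on the second factor turns a state of `ℂ^d ⊗ ℂ^{d'}`
into one of `ℂ^d ⊗ ℂ^{qd'}` with the same Schmidt coefficients, and inner products multiply:
`⟪x ⊗ A, y ⊗ A'⟫ = ⟪x, y⟫ ⟪A, A'⟫`. Hence an orthonormal basis `C` of `ℂ^q` and an SEBk `B` of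
`ℂ^d ⊗ ℂ^{d'}` give the SEBk `{x ⊗ A | x ∈ C, A ∈ B}`, and pairing `t` mutually unbiased bases
`C_a` with `t` mutually unbiased SEBks `B_a` gives overlaps of modulus
`1/√q · 1/√(dd') = 1/√(dqd')`. -/

open Matrix Complex

noncomputable section

/-- Trace inner product on coefficient matrices: the inner product of the
corresponding states of `ℂ^m ⊗ ℂ^n`. -/
def matInner {m n : Type*} [Fintype m] [Fintype n] (A B : Matrix m n ℂ) : ℂ :=
  (Aᴴ * B).trace

/-- The state with coefficient matrix `A` is a special entangled state with Schmidt
number `k` and all Schmidt coefficients `1/√k`: `rank A = k` and `k·AᴴA` is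
idempotent (so the nonzero singular values of `A` are `k` copies of `1/√k`). -/
def IsSEk {m n : Type*} [Fintype m] [Fintype n] (k : ℕ) (A : Matrix m n ℂ) : Prop :=
  A.rank = k ∧ ((k : ℂ) • (Aᴴ * A)) * ((k : ℂ) • (Aᴴ * A)) = (k : ℂ) • (Aᴴ * A)

/-- An SEBk of `ℂ^m ⊗ ℂ^n`: an orthonormal basis of `m·n` special entangled states
with Schmidt number `k`, written via coefficient matrices. -/
def IsSEBk {m n : ℕ} (k : ℕ) (B : Fin (m * n) → Matrix (Fin m) (Fin n) ℂ) : Prop :=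
  (∀ i, IsSEk k (B i)) ∧ ∀ i j, matInner (B i) (B j) = if i = j then 1 else 0

/-- Two bases of `ℂ^m ⊗ ℂ^n` are mutually unbiased. -/
def MUPair {m n : ℕ} (B₁ B₂ : Fin (m * n) → Matrix (Fin m) (Fin n) ℂ) : Prop :=
  ∀ i j, ‖matInner (B₁ i) (B₂ j)‖ = 1 / Real.sqrt (m * n)

/-- There exist `t` pairwise mutually unbiased SEBks in `ℂ^m ⊗ ℂ^n`. -/
def HasMUSEBk (k m n t : ℕ) : Prop :=
  ∃ B : Fin t → Fin (m * n) → Matrix (Fin m) (Fin n) ℂ,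
    (∀ a, IsSEBk k (B a)) ∧ ∀ a b, a ≠ b → MUPair (B a) (B b)

/-- `M_k(m,n)`: the maximum number of pairwise mutually unbiased SEBks in
`ℂ^m ⊗ ℂ^n` (as an extended natural number). -/
def Mnum (k m n : ℕ) : ℕ∞ :=
  sSup {c : ℕ∞ | ∃ t : ℕ, c = t ∧ HasMUSEBk k m n t}

/-- There exist `t` pairwise mutually unbiased orthonormal bases of `ℂ^q`. -/
def HasMUB (q t : ℕ) : Prop :=
  ∃ B : Fin t → Fin q → EuclideanSpace ℂ (Fin q),
    (∀ a, Orthonormal ℂ (B a)) ∧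
    ∀ a b, a ≠ b → ∀ i j, ‖(inner ℂ (B a i) (B b j) : ℂ)‖ = 1 / Real.sqrt q

/-- `N(q)`: the maximum number of mutually unbiased bases of `ℂ^q`. -/
def Nnum (q : ℕ) : ℕ∞ :=
  sSup {c : ℕ∞ | ∃ t : ℕ, c = t ∧ HasMUB q t}

open scoped Kronecker

section Reindex
variable {m n m' n' : Type*} [Fintype m] [Fintype m']

lemma conjTranspose_reindex_mul_reindex (eₘ : m ≃ m') (eₙ : n ≃ n') (A B : Matrix m n ℂ) :
    (reindex eₘ eₙ A)ᴴ * reindex eₘ eₙ B = reindex eₙ eₙ (Aᴴ * B) := by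
  rw [conjTranspose_reindex]
  simp only [reindex_apply, submatrix_mul_equiv]

variable [Fintype n] [Fintype n']

lemma matInner_reindex (eₘ : m ≃ m') (eₙ : n ≃ n') (A B : Matrix m n ℂ) :
    matInner (reindex eₘ eₙ A) (reindex eₘ eₙ B) = matInner A B := by
  rw [matInner, conjTranspose_reindex_mul_reindex]
  exact eₙ.symm.sum_comp fun j => (Aᴴ * B) j j

lemma IsSEk.reindex {k : ℕ} {A : Matrix m n ℂ} (hA : IsSEk k A) (eₘ : m ≃ m') (eₙ : n ≃ n') :
    IsSEk k (reindex eₘ eₙ A) := by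
  refine ⟨by rw [rank_reindex, hA.1], ?_⟩
  have hsmul : ∀ X : Matrix n n ℂ,
      (k : ℂ) • Matrix.reindex eₙ eₙ X = Matrix.reindex eₙ eₙ ((k : ℂ) • X) := fun _ => rfl
  rw [conjTranspose_reindex_mul_reindex, hsmul, reindex_apply, submatrix_mul_equiv, hA.2]

end Reindex

section Kronecker
variable {l m n p : Type*}

lemma conjTranspose_kronecker_mul_kronecker [Fintype l] [Fintype n]
    (A C : Matrix l m ℂ) (B D : Matrix n p ℂ) :
    (A ⊗ₖ B)ᴴ * (C ⊗ₖ D) = (Aᴴ * C) ⊗ₖ (Bᴴ * D) := by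
  rw [conjTranspose_kronecker, mul_kronecker_mul]

lemma matInner_kronecker [Fintype l] [Fintype m] [Fintype n] [Fintype p]
    (A C : Matrix l m ℂ) (B D : Matrix n p ℂ) :
    matInner (A ⊗ₖ B) (C ⊗ₖ D) = matInner A C * matInner B D := by
  rw [matInner, conjTranspose_kronecker_mul_kronecker, trace_kronecker, matInner, matInner]

lemma matInner_replicateRow [Fintype m] (v w : m → ℂ) :
    matInner (replicateRow Unit v) (replicateRow Unit w) = star v ⬝ᵥ w := by
  simp [matInner, trace, mul_apply, dotProduct]

lemma replicateRow_mul_conjTranspose [Fintype m] {v : m → ℂ} (hv : star v ⬝ᵥ v = 1) :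
    replicateRow Unit v * (replicateRow Unit v)ᴴ = 1 := by
  ext
  simp [mul_apply, dotProduct, ← hv, mul_comm]

lemma rank_replicateRow_kronecker [Fintype m] [Fintype p] {v : m → ℂ} (hv : star v ⬝ᵥ v = 1)
    (A : Matrix n p ℂ) : (replicateRow Unit v ⊗ₖ A).rank = A.rank := by
  classical
  set u := replicateRow Unit v
  have hI : ((1 : Matrix Unit Unit ℂ) ⊗ₖ A).rank = A.rank := by
    rw [show (1 : Matrix Unit Unit ℂ) ⊗ₖ A =
      reindex (Equiv.punitProd n).symm (Equiv.punitProd p).symm A by ext; simp, rank_reindex]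
  have hfactor : u ⊗ₖ A = ((1 : Matrix Unit Unit ℂ) ⊗ₖ A) * (u ⊗ₖ (1 : Matrix p p ℂ)) := by
    rw [← mul_kronecker_mul, Matrix.one_mul, Matrix.mul_one]
  have hcofactor : (1 : Matrix Unit Unit ℂ) ⊗ₖ A = (u ⊗ₖ A) * (uᴴ ⊗ₖ (1 : Matrix p p ℂ)) := by
    rw [← mul_kronecker_mul, replicateRow_mul_conjTranspose hv, Matrix.mul_one]
  refine le_antisymm ?_ ?_
  · rw [hfactor, ← hI]; exact rank_mul_le_left _ _
  · rw [← hI, hcofactor]; exact rank_mul_le_left _ _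

lemma IsSEk.replicateRow_kronecker [Fintype m] [Fintype n] [Fintype p] {k : ℕ} {v : m → ℂ}
    (hv : star v ⬝ᵥ v = 1) {A : Matrix n p ℂ} (hA : IsSEk k A) :
    IsSEk k (replicateRow Unit v ⊗ₖ A) := by
  set u := replicateRow Unit v
  have hproj : uᴴ * u * (uᴴ * u) = uᴴ * u := by
    rw [Matrix.mul_assoc, ← Matrix.mul_assoc u, replicateRow_mul_conjTranspose hv, Matrix.one_mul]
  refine ⟨by rw [rank_replicateRow_kronecker hv, hA.1], ?_⟩
  rw [conjTranspose_kronecker_mul_kronecker, ← kronecker_smul, ← mul_kronecker_mul, hproj, hA.2]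

end Kronecker

section ProductBasis
variable {k d d' q : ℕ}

/-- Coefficient matrix of `x ⊗ A` in `ℂ^d ⊗ (ℂ^q ⊗ ℂ^{d'}) = ℂ^d ⊗ ℂ^{qd'}`. -/
def kronState (x : EuclideanSpace ℂ (Fin q)) (A : Matrix (Fin d) (Fin d') ℂ) :
    Matrix (Fin d) (Fin (q * d')) ℂ :=
  reindex (Equiv.punitProd (Fin d)) finProdFinEquiv (replicateRow Unit x.ofLp ⊗ₖ A)

lemma star_dotProduct_eq_inner (x y : EuclideanSpace ℂ (Fin q)) :
    star x.ofLp ⬝ᵥ y.ofLp = inner ℂ x y := by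
  rw [EuclideanSpace.inner_eq_star_dotProduct, dotProduct_comm]

lemma matInner_kronState (x y : EuclideanSpace ℂ (Fin q)) (A B : Matrix (Fin d) (Fin d') ℂ) :
    matInner (kronState x A) (kronState y B) = inner ℂ x y * matInner A B := by
  rw [kronState, kronState, matInner_reindex, matInner_kronecker, matInner_replicateRow,
    star_dotProduct_eq_inner]

lemma IsSEk.kronState {x : EuclideanSpace ℂ (Fin q)} (hx : ‖x‖ = 1)
    {A : Matrix (Fin d) (Fin d') ℂ} (hA : IsSEk k A) : IsSEk k (kronState x A) := by
  have hv : star x.ofLp ⬝ᵥ x.ofLp = 1 := by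
    rw [star_dotProduct_eq_inner, inner_self_eq_norm_sq_to_K, hx]; norm_num
  exact (hA.replicateRow_kronecker hv).reindex _ _

def kronIndex : Fin (d * (q * d')) ≃ Fin (d * d') × Fin q :=
  (finCongr (by ring)).trans finProdFinEquiv.symm

def kronBasis (B : Fin (d * d') → Matrix (Fin d) (Fin d') ℂ)
    (C : Fin q → EuclideanSpace ℂ (Fin q)) : Fin (d * (q * d')) → Matrix (Fin d) (Fin (q * d')) ℂ :=
  fun i => kronState (C (kronIndex i).2) (B (kronIndex i).1)

lemma matInner_kronBasis (B B' : Fin (d * d') → Matrix (Fin d) (Fin d') ℂ)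
    (C C' : Fin q → EuclideanSpace ℂ (Fin q)) (i j : Fin (d * (q * d'))) :
    matInner (kronBasis B C i) (kronBasis B' C' j) =
      inner ℂ (C (kronIndex i).2) (C' (kronIndex j).2) *
        matInner (B (kronIndex i).1) (B' (kronIndex j).1) :=
  matInner_kronState _ _ _ _

lemma IsSEBk.kronBasis {B : Fin (d * d') → Matrix (Fin d) (Fin d') ℂ} (hB : IsSEBk k B)
    {C : Fin q → EuclideanSpace ℂ (Fin q)} (hC : Orthonormal ℂ C) :
    IsSEBk k (kronBasis B C) := by
  refine ⟨fun i => (hB.1 _).kronState (hC.1 _), fun i j => ?_⟩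
  rw [matInner_kronBasis, orthonormal_iff_ite.mp hC, hB.2, ite_zero_mul_ite_zero, one_mul]
  simp only [← kronIndex.injective.eq_iff (a := i), Prod.ext_iff, and_comm]

lemma MUPair.kronBasis {B B' : Fin (d * d') → Matrix (Fin d) (Fin d') ℂ} (hB : MUPair B B')
    {C C' : Fin q → EuclideanSpace ℂ (Fin q)}
    (hC : ∀ i j, ‖(inner ℂ (C i) (C' j) : ℂ)‖ = 1 / Real.sqrt q) :
    MUPair (kronBasis B C) (kronBasis B' C') := by
  intro i j
  rw [matInner_kronBasis, norm_mul, hC, hB, div_mul_div_comm, one_mul,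
    ← Real.sqrt_mul (Nat.cast_nonneg q)]
  push_cast
  ring_nf

end ProductBasis

lemma HasMUSEBk.kron {k d d' q t : ℕ} (hB : HasMUSEBk k d d' t) (hC : HasMUB q t) :
    HasMUSEBk k d (q * d') t := by
  obtain ⟨B, hSEB, hMU⟩ := hB
  obtain ⟨C, hON, hMUB⟩ := hC
  exact ⟨fun a => kronBasis (B a) (C a), fun a => (hSEB a).kronBasis (hON a),
    fun a b hab => (hMU a b hab).kronBasis (hMUB a b hab)⟩

lemma HasMUSEBk.mono {k m n t t' : ℕ} (h : HasMUSEBk k m n t) (ht : t' ≤ t) :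
    HasMUSEBk k m n t' := by
  obtain ⟨B, hSEB, hMU⟩ := h
  exact ⟨fun a => B (Fin.castLE ht a), fun a => hSEB _,
    fun a b hab => hMU _ _ ((Fin.castLE_injective ht).ne hab)⟩

lemma HasMUB.mono {q t t' : ℕ} (h : HasMUB q t) (ht : t' ≤ t) : HasMUB q t' := by
  obtain ⟨C, hON, hMUB⟩ := h
  exact ⟨fun a => C (Fin.castLE ht a), fun a => hON _,
    fun a b hab => hMUB _ _ ((Fin.castLE_injective ht).ne hab)⟩

lemma min_sSup_le_sSup {P Q R : ℕ → Prop} (h : ∀ s t, P s → Q t → R (min s t)) :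
    min (sSup {c : ℕ∞ | ∃ t : ℕ, c = t ∧ P t}) (sSup {c : ℕ∞ | ∃ t : ℕ, c = t ∧ Q t}) ≤
      sSup {c : ℕ∞ | ∃ t : ℕ, c = t ∧ R t} := by
  refine le_of_forall_lt fun c hc => ?_
  obtain ⟨_, ⟨s, rfl, hs⟩, hcs⟩ := lt_sSup_iff.mp (lt_min_iff.mp hc).1
  obtain ⟨_, ⟨t, rfl, ht⟩, hct⟩ := lt_sSup_iff.mp (lt_min_iff.mp hc).2
  calc c < ((min s t : ℕ) : ℕ∞) := by rw [Nat.mono_cast.map_min]; exact lt_min hcs hct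
    _ ≤ _ := le_sSup (show _ ∈ {c : ℕ∞ | ∃ t : ℕ, c = t ∧ R t} from ⟨min s t, rfl, h s t hs ht⟩)

/-- If there exist `t₁` mutually unbiased SEBks in `ℂ^d ⊗ ℂ^{d'}` and `t₂` mutually
unbiased bases of `ℂ^q`, then there exist at least `min{t₁,t₂}` mutually unbiased
SEBks in `ℂ^d ⊗ ℂ^{qd'}`; i.e. `M_k(d, qd') ≥ min{N(q), M_k(d,d')}`. -/
theorem Mnum_mub_bound (k d d' q : ℕ) :
    (∀ t₁ t₂ : ℕ, HasMUSEBk k d d' t₁ → HasMUB q t₂ → HasMUSEBk k d (q * d') (min t₁ t₂)) ∧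
    min (Nnum q) (Mnum k d d') ≤ Mnum k d (q * d') := by
  have hkron : ∀ t₁ t₂ : ℕ, HasMUSEBk k d d' t₁ → HasMUB q t₂ →
      HasMUSEBk k d (q * d') (min t₁ t₂) := fun t₁ t₂ hB hC =>
    (hB.mono (min_le_left _ _)).kron (hC.mono (min_le_right _ _))
  refine ⟨hkron, min_sSup_le_sSup fun t₂ t₁ hC hB => ?_⟩
  rw [min_comm]
  exact hkron t₁ t₂ hB hC
end
end

section
/- For every integer d ≥ 2, there exist at least 3 pairwise mutually unbiased maximally entangled bases in C^d ⊗ C^d; i.e., M_d(d,d) ≥ 3. -/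
open Matrix Complex

noncomputable section

/-!
The clock-and-shift (Weyl) operators `W(s,t)` on `ℂ^R`, scaled by `1/√|R|`, form a maximally
entangled basis, and so does `{V W(s,t)/√|R|}` for every unitary `V`. The bases for `V` and `V'`
are mutually unbiased as soon as every Weyl coefficient `tr(W(s,t)ᴴ VᴴV')` has modulus one.
For a quadratic phase `q` (`|q| = 1`, `q(x+y) = q(x) q(y) ψ(xy)`) and the Fourier matrix `F`,
the unitaries `1`, `F diag(q̄)` and `diag(q) F diag(q̄²)` pass this test pairwise: each Weyl
coefficient is a unimodular multiple of one or two quadratic Gauss sums over `√|R|`, and a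
quadratic Gauss sum has modulus `√|R|`. On `ZMod d` one can take `q(x) = exp(πi x(x+d)/d)`.
-/

lemma star_inv_sqrt_mul_inv_sqrt (n : ℕ) :
    star ((Real.sqrt n : ℂ)⁻¹) * (Real.sqrt n : ℂ)⁻¹ = (n : ℂ)⁻¹ := by
  rw [Complex.star_def, map_inv₀, Complex.conj_ofReal, ← mul_inv, ← Complex.ofReal_mul,
    Real.mul_self_sqrt (Nat.cast_nonneg _), Complex.ofReal_natCast]

section MatInner

variable {m n m' n' : Type*} [Fintype m] [Fintype n] [Fintype m'] [Fintype n']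

lemma matInner_eq_sum (A B : Matrix m n ℂ) :
    matInner A B = ∑ i, ∑ j, star (A i j) * B i j := by
  simp only [matInner, trace, diag_apply, mul_apply, conjTranspose_apply]
  exact Finset.sum_comm

lemma matInner_swap (A B : Matrix m n ℂ) : matInner B A = star (matInner A B) := by
  simp only [matInner_eq_sum, star_sum, star_mul', star_star, mul_comm]

lemma norm_matInner_comm (A B : Matrix m n ℂ) : ‖matInner B A‖ = ‖matInner A B‖ := by
  rw [matInner_swap, norm_star]

lemma matInner_smul_smul (c c' : ℂ) (A B : Matrix m n ℂ) :
    matInner (c • A) (c' • B) = star c * c' * matInner A B := by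
  simp only [matInner, conjTranspose_smul, smul_mul, Matrix.mul_smul, trace_smul, smul_smul,
    smul_eq_mul, mul_comm c']

lemma matInner_mul_left [DecidableEq m] (V : Matrix m m ℂ) (A B : Matrix m n ℂ) :
    matInner (V * A) B = matInner A (Vᴴ * B) := by
  simp only [matInner, conjTranspose_mul, Matrix.mul_assoc]

lemma matInner_submatrix (A B : Matrix m n ℂ) (e : m' ≃ m) (f : n' ≃ n) :
    matInner (A.submatrix e f) (B.submatrix e f) = matInner A B := by
  simp only [matInner_eq_sum, submatrix_apply]
  rw [← e.sum_comp]
  exact Finset.sum_congr rfl fun i _ => f.sum_comp fun j => star (A (e i) j) * B (e i) j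

lemma isSEk_of_conjTranspose_mul_self [DecidableEq n] [Nonempty n] {A : Matrix n n ℂ}
    (h : Aᴴ * A = (Fintype.card n : ℂ)⁻¹ • 1) : IsSEk (Fintype.card n) A := by
  have hcard : (Fintype.card n : ℂ) ≠ 0 := Nat.cast_ne_zero.mpr Fintype.card_ne_zero
  have hinv : ((Fintype.card n : ℂ) • Aᴴ) * A = 1 := by
    rw [smul_mul, h, smul_smul, mul_inv_cancel₀ hcard, one_smul]
  refine ⟨A.rank_of_isUnit ((isUnit_iff_isUnit_det A).mpr (isUnit_det_of_left_inverse hinv)), ?_⟩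
  rw [h, smul_smul, mul_inv_cancel₀ hcard, one_smul, Matrix.one_mul]

end MatInner

section Weyl

variable {R : Type*} [CommRing R] [Fintype R] [DecidableEq R] (ψ : AddChar R ℂ)

def weyl (s t : R) : Matrix R R ℂ :=
  Matrix.of fun x y => if y = x + s then ψ (t * x) else 0

omit [DecidableEq R] in
lemma star_addChar (a : R) : star (ψ a) = ψ (-a) :=
  (ψ.map_neg_eq_conj a).symm

lemma matInner_weyl (s t : R) (A : Matrix R R ℂ) :
    matInner (weyl ψ s t) A = ∑ x, ψ (-(t * x)) * A x (x + s) := by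
  simp only [matInner_eq_sum, weyl, of_apply, apply_ite star, star_zero, ite_mul, zero_mul,
    Finset.sum_ite_eq', Finset.mem_univ, if_true, star_addChar]

lemma mul_weyl_apply (A : Matrix R R ℂ) (s t x y : R) :
    (A * weyl ψ s t) x y = A x (y - s) * ψ (t * (y - s)) := by
  simp only [mul_apply, weyl, of_apply, mul_ite, mul_zero, ← sub_eq_iff_eq_add,
    Finset.sum_ite_eq, Finset.mem_univ, if_true]

lemma matInner_weyl_mul_weyl (A : Matrix R R ℂ) (s t s' t' : R) :
    matInner (weyl ψ s t) (A * weyl ψ s' t') =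
      ψ (t' * (s - s')) * matInner (weyl ψ (s - s') (t - t')) A := by
  simp only [matInner_weyl, mul_weyl_apply, Finset.mul_sum]
  refine Finset.sum_congr rfl fun x _ => ?_
  have hψ : ψ (-(t * x)) * ψ (t' * (x + s - s')) = ψ (t' * (s - s')) * ψ (-((t - t') * x)) := by
    rw [← ψ.map_add_eq_mul, ← ψ.map_add_eq_mul]
    ring_nf
  rw [show x + (s - s') = x + s - s' by ring]
  linear_combination A x (x + s - s') * hψ

lemma conjTranspose_weyl_mul_self (s t : R) : (weyl ψ s t)ᴴ * weyl ψ s t = 1 := by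
  ext i j
  simp only [mul_apply, conjTranspose_apply, weyl, of_apply, apply_ite star, star_zero, ite_mul,
    zero_mul, mul_ite, mul_zero, ← sub_eq_iff_eq_add, Finset.sum_ite_eq, Finset.mem_univ,
    if_true, sub_left_inj, star_addChar, ← ψ.map_add_eq_mul, neg_add_cancel, ψ.map_zero_eq_one,
    one_apply]

variable {ψ}

lemma sum_addChar_mul (hψ : ψ.IsPrimitive) (c : R) :
    ∑ x, ψ (c * x) = if c = 0 then (Fintype.card R : ℂ) else 0 := by
  simp_rw [mul_comm c]
  exact_mod_cast AddChar.sum_mulShift c hψ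

lemma matInner_weyl_one (hψ : ψ.IsPrimitive) (s t : R) :
    matInner (weyl ψ s t) 1 = if s = 0 ∧ t = 0 then (Fintype.card R : ℂ) else 0 := by
  simp only [matInner_weyl, one_apply, left_eq_add, mul_ite, mul_one, mul_zero]
  by_cases hs : s = 0
  · simp only [hs, if_true, true_and, ← neg_mul, sum_addChar_mul hψ, neg_eq_zero]
  · simp [hs]

end Weyl

section WeylBasis

variable {R : Type*} [CommRing R] [Fintype R] [DecidableEq R] (ψ : AddChar R ℂ)

def weylBasis (V : Matrix R R ℂ) (p : R × R) : Matrix R R ℂ :=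
  (Real.sqrt (Fintype.card R) : ℂ)⁻¹ • (V * weyl ψ p.1 p.2)

def IsWeylFlat (A : Matrix R R ℂ) : Prop :=
  ∀ s t, ‖matInner (weyl ψ s t) A‖ = 1

lemma matInner_weylBasis (V V' : Matrix R R ℂ) (p p' : R × R) :
    matInner (weylBasis ψ V p) (weylBasis ψ V' p') = (Fintype.card R : ℂ)⁻¹ *
      (ψ (p'.2 * (p.1 - p'.1)) * matInner (weyl ψ (p.1 - p'.1) (p.2 - p'.2)) (Vᴴ * V')) := by
  rw [weylBasis, weylBasis, matInner_smul_smul, matInner_mul_left, ← Matrix.mul_assoc,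
    matInner_weyl_mul_weyl, star_inv_sqrt_mul_inv_sqrt]

lemma conjTranspose_weylBasis_mul_self {V : Matrix R R ℂ} (hV : V ∈ unitaryGroup R ℂ)
    (p : R × R) :
    (weylBasis ψ V p)ᴴ * weylBasis ψ V p = (Fintype.card R : ℂ)⁻¹ • 1 := by
  have hV' : Vᴴ * V = 1 := mem_unitaryGroup_iff'.mp hV
  rw [weylBasis, conjTranspose_smul, smul_mul, Matrix.mul_smul, smul_smul, conjTranspose_mul,
    Matrix.mul_assoc, ← Matrix.mul_assoc Vᴴ, hV', Matrix.one_mul, conjTranspose_weyl_mul_self,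
    star_inv_sqrt_mul_inv_sqrt]

variable {ψ}

lemma matInner_weylBasis_self (hψ : ψ.IsPrimitive) {V : Matrix R R ℂ}
    (hV : V ∈ unitaryGroup R ℂ) (p p' : R × R) :
    matInner (weylBasis ψ V p) (weylBasis ψ V p') = if p = p' then 1 else 0 := by
  have hV' : Vᴴ * V = 1 := mem_unitaryGroup_iff'.mp hV
  rw [matInner_weylBasis, hV', matInner_weyl_one hψ]
  simp only [sub_eq_zero, ← Prod.ext_iff]
  split_ifs with h
  · rw [h, sub_self, mul_zero, ψ.map_zero_eq_one, one_mul]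
    exact inv_mul_cancel₀ (Nat.cast_ne_zero.mpr Fintype.card_ne_zero)
  · rw [mul_zero, mul_zero]

lemma norm_matInner_weylBasis {V V' : Matrix R R ℂ} (hVV' : IsWeylFlat ψ (Vᴴ * V'))
    (p p' : R × R) :
    ‖matInner (weylBasis ψ V p) (weylBasis ψ V' p')‖ = (Fintype.card R : ℝ)⁻¹ := by
  rw [matInner_weylBasis, norm_mul, norm_mul, hVV', ψ.norm_apply, norm_inv, Complex.norm_natCast,
    one_mul, mul_one]

end WeylBasis

lemma hasMUSEBk_of_isWeylFlat {R : Type*} [CommRing R] [Fintype R] [DecidableEq R]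
    {ψ : AddChar R ℂ} (hψ : ψ.IsPrimitive) {t : ℕ} (V : Fin t → Matrix R R ℂ)
    (hV : ∀ a, V a ∈ unitaryGroup R ℂ) (hflat : ∀ a b, a < b → IsWeylFlat ψ ((V a)ᴴ * V b)) :
    HasMUSEBk (Fintype.card R) (Fintype.card R) (Fintype.card R) t := by
  let e : Fin (Fintype.card R) ≃ R := (Fintype.equivFin R).symm
  let E : Fin (Fintype.card R * Fintype.card R) ≃ R × R :=
    finProdFinEquiv.symm.trans (e.prodCongr e)
  have : Nonempty (Fin (Fintype.card R)) := e.nonempty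
  refine ⟨fun a i => (weylBasis ψ (V a) (E i)).submatrix e e,
    fun a => ⟨fun i => ?_, fun i j => ?_⟩, fun a b hab i j => ?_⟩
  · have h := isSEk_of_conjTranspose_mul_self (A := (weylBasis ψ (V a) (E i)).submatrix e e) (by
      rw [conjTranspose_submatrix, submatrix_mul_equiv, conjTranspose_weylBasis_mul_self ψ (hV a),
        submatrix_smul, Pi.smul_apply, Pi.smul_apply, submatrix_one_equiv, Fintype.card_fin])
    rwa [Fintype.card_fin] at h
  · simp only [matInner_submatrix, matInner_weylBasis_self hψ (hV a), E.injective.eq_iff]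
  · show ‖matInner _ _‖ = _
    rw [matInner_submatrix, Real.sqrt_mul_self (Nat.cast_nonneg _), one_div]
    rcases hab.lt_or_gt with h | h
    · exact norm_matInner_weylBasis (hflat a b h) _ _
    · rw [norm_matInner_comm]
      exact norm_matInner_weylBasis (hflat b a h) _ _

structure IsQuadraticPhase {R : Type*} [CommRing R] (ψ : AddChar R ℂ) (f : R → ℂ) : Prop where
  norm_eq_one : ∀ x, ‖f x‖ = 1
  map_add : ∀ x y, f (x + y) = f x * f y * ψ (x * y)

namespace IsQuadraticPhase

variable {R : Type*} [CommRing R] {ψ : AddChar R ℂ} {f : R → ℂ}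

lemma star_mul_self (hf : IsQuadraticPhase ψ f) (x : R) : star (f x) * f x = 1 := by
  rw [Complex.star_def, mul_comm, Complex.mul_conj', hf.norm_eq_one, Complex.ofReal_one, one_pow]

lemma map_zero (hf : IsQuadraticPhase ψ f) : f 0 = 1 := by
  have h := hf.map_add 0 0
  rw [add_zero, mul_zero, ψ.map_zero_eq_one, mul_one] at h
  have h0 : f 0 ≠ 0 := norm_ne_zero_iff.mp (by rw [hf.norm_eq_one]; exact one_ne_zero)
  exact (mul_eq_left₀ h0).mp h.symm

variable [Fintype R]

lemma star_map_add (hf : IsQuadraticPhase ψ f) (x y : R) :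
    star (f (x + y)) = star (f x) * star (f y) * ψ (-(x * y)) := by
  rw [hf.map_add, star_mul', star_mul', star_addChar]

lemma mul_addChar (hf : IsQuadraticPhase ψ f) (c : R) :
    IsQuadraticPhase ψ (fun x => f x * ψ (c * x)) where
  norm_eq_one x := by rw [norm_mul, hf.norm_eq_one, ψ.norm_apply, one_mul]
  map_add x y := by rw [hf.map_add, mul_add, ψ.map_add_eq_mul]; ring

lemma addChar_mul_self_mul_star (hf : IsQuadraticPhase ψ f) :
    IsQuadraticPhase ψ (fun x => ψ (x * x) * star (f x)) where
  norm_eq_one x := by rw [norm_mul, norm_star, hf.norm_eq_one, ψ.norm_apply, one_mul]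
  map_add x y := by
    have h : ψ ((x + y) * (x + y)) * star (ψ (x * y)) = ψ (x * x) * ψ (y * y) * ψ (x * y) := by
      rw [star_addChar, ← ψ.map_add_eq_mul, ← ψ.map_add_eq_mul, ← ψ.map_add_eq_mul]
      ring_nf
    rw [hf.map_add, star_mul', star_mul']
    linear_combination star (f x) * star (f y) * h

variable [DecidableEq R]

lemma norm_sum (hψ : ψ.IsPrimitive) (hf : IsQuadraticPhase ψ f) :
    ‖∑ x, f x‖ = Real.sqrt (Fintype.card R) := by
  have key : (∑ x, f x) * star (∑ y, f y) = Fintype.card R :=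
    calc (∑ x, f x) * star (∑ y, f y) = ∑ y, ∑ m, f (y + m) * star (f y) := by
          rw [star_sum, Finset.sum_mul_sum, Finset.sum_comm]
          exact Finset.sum_congr rfl fun y _ => (Equiv.sum_comp (Equiv.addLeft y) _).symm
      _ = ∑ m, f m * ∑ y, ψ (m * y) := by
          rw [Finset.sum_comm]
          refine Finset.sum_congr rfl fun m _ => ?_
          rw [Finset.mul_sum]
          refine Finset.sum_congr rfl fun y _ => ?_
          rw [hf.map_add, mul_comm m]
          linear_combination f m * ψ (y * m) * hf.star_mul_self y
      _ = Fintype.card R := by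
          simp only [sum_addChar_mul hψ, mul_ite, mul_zero, Finset.sum_ite_eq', Finset.mem_univ,
            if_true, hf.map_zero, one_mul]
  rw [← Real.sqrt_sq (norm_nonneg _)]
  congr 1
  exact_mod_cast (Complex.mul_conj' _).symm.trans key

lemma norm_sum_mul_addChar (hψ : ψ.IsPrimitive) (hf : IsQuadraticPhase ψ f) (c : R) :
    ‖∑ x, f x * ψ (c * x)‖ = Real.sqrt (Fintype.card R) :=
  (hf.mul_addChar c).norm_sum hψ

lemma norm_sum_star_mul_addChar (hψ : ψ.IsPrimitive) (hf : IsQuadraticPhase ψ f) (c : R) :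
    ‖∑ x, star (f x) * ψ (c * x)‖ = Real.sqrt (Fintype.card R) := by
  rw [← hf.norm_sum_mul_addChar hψ (-c), ← norm_star, star_sum]
  simp only [star_mul', star_star, star_addChar, neg_mul]

end IsQuadraticPhase

lemma diagonal_mem_unitaryGroup {n : Type*} [Fintype n] [DecidableEq n] {v : n → ℂ}
    (hv : ∀ i, ‖v i‖ = 1) : diagonal v ∈ unitaryGroup n ℂ := by
  rw [mem_unitaryGroup_iff', star_eq_conjTranspose, diagonal_conjTranspose,
    diagonal_mul_diagonal, ← diagonal_one]
  congr 1
  ext i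
  rw [Pi.star_apply, Complex.star_def, mul_comm, Complex.mul_conj', hv, Complex.ofReal_one,
    one_pow]

section Unitaries

variable {R : Type*} [CommRing R] [Fintype R] [DecidableEq R] (ψ : AddChar R ℂ) (q : R → ℂ)

def fourierMatrix : Matrix R R ℂ :=
  (Real.sqrt (Fintype.card R) : ℂ)⁻¹ • Matrix.of fun x y => ψ (x * y)

def fourierChirp : Matrix R R ℂ :=
  fourierMatrix ψ * diagonal fun z => star (q z)

def chirpFourierChirp : Matrix R R ℂ :=
  diagonal q * fourierMatrix ψ * diagonal fun z => star (q z) ^ 2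

variable {ψ q}

omit [DecidableEq R] in
lemma norm_inv_sqrt_card_mul_sqrt_card :
    ‖(Real.sqrt (Fintype.card R) : ℂ)⁻¹‖ * Real.sqrt (Fintype.card R) = 1 := by
  rw [norm_inv, Complex.norm_real, Real.norm_of_nonneg (Real.sqrt_nonneg _)]
  exact inv_mul_cancel₀ (Real.sqrt_ne_zero'.mpr (Nat.cast_pos.mpr Fintype.card_pos))

lemma fourierMatrix_mem_unitaryGroup (hψ : ψ.IsPrimitive) :
    fourierMatrix ψ ∈ unitaryGroup R ℂ := by
  rw [mem_unitaryGroup_iff', star_eq_conjTranspose]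
  ext i j
  have hterm : ∀ x, star ((fourierMatrix ψ) x i) * (fourierMatrix ψ) x j =
      (Fintype.card R : ℂ)⁻¹ * ψ ((j - i) * x) := fun x => by
    simp only [fourierMatrix, Matrix.smul_apply, of_apply, smul_eq_mul, star_mul', star_addChar]
    rw [mul_mul_mul_comm, star_inv_sqrt_mul_inv_sqrt, ← ψ.map_add_eq_mul]
    ring_nf
  simp only [mul_apply, conjTranspose_apply, hterm, ← Finset.mul_sum, sum_addChar_mul hψ,
    sub_eq_zero, one_apply, eq_comm (a := j)]
  split_ifs
  · exact inv_mul_cancel₀ (Nat.cast_ne_zero.mpr Fintype.card_ne_zero)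
  · exact mul_zero _

lemma fourierChirp_mem_unitaryGroup (hψ : ψ.IsPrimitive) (hq : IsQuadraticPhase ψ q) :
    fourierChirp ψ q ∈ unitaryGroup R ℂ :=
  Submonoid.mul_mem _ (fourierMatrix_mem_unitaryGroup hψ)
    (diagonal_mem_unitaryGroup fun z => by rw [norm_star, hq.norm_eq_one])

lemma chirpFourierChirp_mem_unitaryGroup (hψ : ψ.IsPrimitive) (hq : IsQuadraticPhase ψ q) :
    chirpFourierChirp ψ q ∈ unitaryGroup R ℂ :=
  Submonoid.mul_mem _
    (Submonoid.mul_mem _ (diagonal_mem_unitaryGroup hq.norm_eq_one)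
      (fourierMatrix_mem_unitaryGroup hψ))
    (diagonal_mem_unitaryGroup fun z => by rw [norm_pow, norm_star, hq.norm_eq_one, one_pow])

lemma fourierChirp_apply_add (hq : IsQuadraticPhase ψ q) (x s : R) :
    fourierChirp ψ q x (x + s) =
      (Real.sqrt (Fintype.card R) : ℂ)⁻¹ * star (q s) * (ψ (x * x) * star (q x)) := by
  have e : ψ (x * (x + s)) * ψ (-(x * s)) = ψ (x * x) := by
    rw [← ψ.map_add_eq_mul]
    ring_nf
  simp only [fourierChirp, mul_diagonal, fourierMatrix, Matrix.smul_apply, of_apply, smul_eq_mul,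
    hq.star_map_add]
  linear_combination (Real.sqrt (Fintype.card R) : ℂ)⁻¹ * star (q x) * star (q s) * e

lemma chirpFourierChirp_apply_add (hq : IsQuadraticPhase ψ q) (x s : R) :
    chirpFourierChirp ψ q x (x + s) = (Real.sqrt (Fintype.card R) : ℂ)⁻¹ * star (q s) ^ 2 *
      (ψ (x * x) * star (q x) * ψ (-s * x)) := by
  have e : ψ (x * (x + s)) * ψ (-(x * s)) * ψ (-(x * s)) = ψ (x * x) * ψ (-s * x) := by
    rw [← ψ.map_add_eq_mul, ← ψ.map_add_eq_mul, ← ψ.map_add_eq_mul]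
    ring_nf
  simp only [chirpFourierChirp, mul_diagonal, diagonal_mul, fourierMatrix, Matrix.smul_apply,
    of_apply, smul_eq_mul, hq.star_map_add]
  linear_combination (Real.sqrt (Fintype.card R) : ℂ)⁻¹ * star (q s) ^ 2 * star (q x) *
    (q x * star (q x) * e + ψ (x * x) * ψ (-s * x) * (hq.star_mul_self x))

end Unitaries

section Flatness

variable {R : Type*} [CommRing R] [Fintype R] [DecidableEq R] {ψ : AddChar R ℂ} {q : R → ℂ}

lemma conjTranspose_fourierChirp_mul_chirpFourierChirp_apply (x z : R) :
    ((fourierChirp ψ q)ᴴ * chirpFourierChirp ψ q) x z =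
      (Fintype.card R : ℂ)⁻¹ * q x * star (q z) ^ 2 * ∑ y, q y * ψ ((z - x) * y) := by
  rw [mul_apply, Finset.mul_sum]
  simp only [conjTranspose_apply, fourierChirp, chirpFourierChirp, mul_diagonal, diagonal_mul,
    fourierMatrix, Matrix.smul_apply, of_apply, smul_eq_mul]
  refine Finset.sum_congr rfl fun y _ => ?_
  have e : star (ψ (y * x)) * ψ (y * z) = ψ ((z - x) * y) := by
    rw [star_addChar, ← ψ.map_add_eq_mul]
    ring_nf
  rw [star_mul', star_mul', star_star, ← star_inv_sqrt_mul_inv_sqrt]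
  linear_combination star ((Real.sqrt (Fintype.card R) : ℂ)⁻¹) *
    (Real.sqrt (Fintype.card R) : ℂ)⁻¹ * q x * star (q z) ^ 2 * q y * e

lemma isWeylFlat_fourierChirp (hψ : ψ.IsPrimitive) (hq : IsQuadraticPhase ψ q) :
    IsWeylFlat ψ (fourierChirp ψ q) := by
  intro s t
  have hsum : ∑ x, ψ (-(t * x)) * fourierChirp ψ q x (x + s) =
      (Real.sqrt (Fintype.card R) : ℂ)⁻¹ * star (q s) *
        ∑ x, ψ (x * x) * star (q x) * ψ (-t * x) := by
    rw [Finset.mul_sum]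
    refine Finset.sum_congr rfl fun x _ => ?_
    rw [fourierChirp_apply_add hq, neg_mul]
    ring
  rw [matInner_weyl, hsum, norm_mul, norm_mul, norm_star, hq.norm_eq_one, mul_one,
    hq.addChar_mul_self_mul_star.norm_sum_mul_addChar hψ, norm_inv_sqrt_card_mul_sqrt_card]

lemma isWeylFlat_chirpFourierChirp (hψ : ψ.IsPrimitive) (hq : IsQuadraticPhase ψ q) :
    IsWeylFlat ψ (chirpFourierChirp ψ q) := by
  intro s t
  have hsum : ∑ x, ψ (-(t * x)) * chirpFourierChirp ψ q x (x + s) =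
      (Real.sqrt (Fintype.card R) : ℂ)⁻¹ * star (q s) ^ 2 *
        ∑ x, ψ (x * x) * star (q x) * ψ ((-t - s) * x) := by
    rw [Finset.mul_sum]
    refine Finset.sum_congr rfl fun x _ => ?_
    have e : ψ (-(t * x)) * ψ (-s * x) = ψ ((-t - s) * x) := by
      rw [← ψ.map_add_eq_mul]
      ring_nf
    rw [chirpFourierChirp_apply_add hq]
    linear_combination (Real.sqrt (Fintype.card R) : ℂ)⁻¹ * star (q s) ^ 2 * ψ (x * x) *
      star (q x) * e
  rw [matInner_weyl, hsum, norm_mul, norm_mul, norm_pow, norm_star, hq.norm_eq_one, one_pow,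
    mul_one, hq.addChar_mul_self_mul_star.norm_sum_mul_addChar hψ,
    norm_inv_sqrt_card_mul_sqrt_card]

lemma isWeylFlat_conjTranspose_fourierChirp_mul_chirpFourierChirp (hψ : ψ.IsPrimitive)
    (hq : IsQuadraticPhase ψ q) :
    IsWeylFlat ψ ((fourierChirp ψ q)ᴴ * chirpFourierChirp ψ q) := by
  intro s t
  have hsum : ∑ x, ψ (-(t * x)) * ((fourierChirp ψ q)ᴴ * chirpFourierChirp ψ q) x (x + s) =
      (Fintype.card R : ℂ)⁻¹ * star (q s) ^ 2 * (∑ y, q y * ψ (s * y)) *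
        ∑ x, star (q x) * ψ ((-t - s - s) * x) := by
    rw [Finset.mul_sum]
    refine Finset.sum_congr rfl fun x _ => ?_
    have e : ψ (-(t * x)) * ψ (-(x * s)) * ψ (-(x * s)) = ψ ((-t - s - s) * x) := by
      rw [← ψ.map_add_eq_mul, ← ψ.map_add_eq_mul]
      ring_nf
    rw [conjTranspose_fourierChirp_mul_chirpFourierChirp_apply, add_sub_cancel_left,
      hq.star_map_add]
    linear_combination (Fintype.card R : ℂ)⁻¹ * star (q s) ^ 2 * (∑ y, q y * ψ (s * y)) *
      star (q x) * (star (q x) * q x * e + ψ ((-t - s - s) * x) * hq.star_mul_self x)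
  rw [matInner_weyl, hsum, norm_mul, norm_mul, norm_mul, norm_pow, norm_star, hq.norm_eq_one,
    one_pow, mul_one, hq.norm_sum_mul_addChar hψ, hq.norm_sum_star_mul_addChar hψ, norm_inv,
    Complex.norm_natCast, mul_assoc, Real.mul_self_sqrt (Nat.cast_nonneg _)]
  exact inv_mul_cancel₀ (Nat.cast_ne_zero.mpr Fintype.card_ne_zero)

end Flatness

section Chirp

open Real

-- `x (x + d)` rather than `x²`: shifting `x` by `d` then changes the exponent by an even
-- multiple of `πi` also when `d` is even.
def chirp (d : ℕ) (x : ZMod d) : ℂ :=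
  Complex.exp ((π * (x.val * (x.val + d)) / d : ℝ) * I)

lemma chirp_intCast (d : ℕ) [NeZero d] (n : ℤ) :
    chirp d n = Complex.exp ((π * (n * (n + d)) / d : ℝ) * I) := by
  set Q : ℤ → ℂ := fun n => Complex.exp ((π * (n * (n + d)) / d : ℝ) * I)
  have hd : (d : ℂ) ≠ 0 := Nat.cast_ne_zero.mpr (NeZero.ne d)
  have hQ : Function.Periodic Q d := fun n => by
    have h : ((π * ((n + d : ℤ) * ((n + d : ℤ) + d)) / d : ℝ) * I : ℂ) =
        (π * (n * (n + d)) / d : ℝ) * I + (n + d : ℤ) * (2 * π * I) := by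
      push_cast
      field_simp
      ring
    simp only [Q, h, Complex.exp_add, Complex.exp_int_mul_two_pi_mul_I, mul_one]
  have hval : (((n : ZMod d).val : ℕ) : ℤ) = n - (n / d) • (d : ℤ) := by
    rw [ZMod.val_intCast, Int.emod_def, smul_eq_mul, mul_comm]
  calc chirp d n = Q (((n : ZMod d).val : ℕ) : ℤ) := by simp only [chirp, Q, Int.cast_natCast]
    _ = Q n := by rw [hval, hQ.sub_zsmul_eq]

lemma isQuadraticPhase_chirp (d : ℕ) [NeZero d] :
    IsQuadraticPhase ZMod.stdAddChar (chirp d) where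
  norm_eq_one x := Complex.norm_exp_ofReal_mul_I _
  map_add x y := by
    obtain ⟨m, rfl⟩ := ZMod.intCast_surjective x
    obtain ⟨n, rfl⟩ := ZMod.intCast_surjective y
    rw [← Int.cast_add, ← Int.cast_mul, chirp_intCast, chirp_intCast, chirp_intCast,
      ZMod.stdAddChar_coe, ← Complex.exp_add, ← Complex.exp_add]
    congr 1
    push_cast
    field_simp
    ring

end Chirp

lemma le_Mnum_of_hasMUSEBk {k m n t : ℕ} (h : HasMUSEBk k m n t) : (t : ℕ∞) ≤ Mnum k m n :=
  le_sSup ⟨t, rfl, h⟩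

lemma hasMUSEBk_three {R : Type*} [CommRing R] [Fintype R] [DecidableEq R]
    {ψ : AddChar R ℂ} (hψ : ψ.IsPrimitive) {q : R → ℂ} (hq : IsQuadraticPhase ψ q) :
    HasMUSEBk (Fintype.card R) (Fintype.card R) (Fintype.card R) 3 := by
  refine hasMUSEBk_of_isWeylFlat hψ ![1, fourierChirp ψ q, chirpFourierChirp ψ q]
    (fun a => ?_) (fun a b hab => ?_)
  · fin_cases a
    · exact one_mem _
    · exact fourierChirp_mem_unitaryGroup hψ hq
    · exact chirpFourierChirp_mem_unitaryGroup hψ hq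
  · fin_cases a <;> fin_cases b <;>
      simp [isWeylFlat_fourierChirp hψ hq, isWeylFlat_chirpFourierChirp hψ hq,
        isWeylFlat_conjTranspose_fourierChirp_mul_chirpFourierChirp hψ hq] at hab ⊢

/-- For every integer `d ≥ 2` there exist at least 3 pairwise mutually unbiased
maximally entangled bases in `ℂ^d ⊗ ℂ^d`: `M_d(d,d) ≥ 3`. -/
theorem Mnum_self_ge_three : ∀ d : ℕ, 2 ≤ d → (3 : ℕ∞) ≤ Mnum d d d := by
  intro d hd
  have : NeZero d := ⟨by omega⟩
  have h := hasMUSEBk_three (ZMod.isPrimitive_stdAddChar d) (isQuadraticPhase_chirp d)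
  rw [ZMod.card] at h
  exact le_Mnum_of_hasMUSEBk h
end
end
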